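/- Assume the p=3 parasupersymmetry algebra, with Q₁ = (Q† + Q)/(2√3) and Q₂ = (Q† − Q)/(2√3·i). Let Ψ ≠ 0 satisfy Q₁Ψ = q₁Ψ and HΨ = EΨ (q₁, E ∈ ℝ). If E < 0, then Q²Ψ = 0, (Q†)²Ψ = 0, and (Q + Q†)Ψ = 2√3·q₁·Ψ. In other words, a state can have negative energy only if it is annihilated by Q² and (Q†)² and is an eigenvector of Q + Q† with real eigenvalue. -/

import Mathlib

/-!
Put `P = Q†Q + QQ† ≥ 0`. Relations (ii) and (iv) say that `B = Q²` and `B = Q†²` satisfy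
`BP + PB = 6BH`, and together with `[B, H] = 0` this forces `P` to commute with `B†B`.
Commuting positive operators have a positive product, so for an eigenvector `HΨ = EΨ`
`0 ≤ ⟪P B†B Ψ, Ψ⟫ = ⟪BPΨ, BΨ⟫ = 6E‖BΨ‖² - ⟪PBΨ, BΨ⟫ ≤ 6E‖BΨ‖²`,
which for `E < 0` gives `BΨ = 0`.
-/

open ContinuousLinearMap

/-- The hermitian parasupercharge `Q₁ = (Q† + Q)/(2√3)`. -/
noncomputable def hermQ1 {𝓗 : Type*} [NormedAddCommGroup 𝓗] [InnerProductSpace ℂ 𝓗]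
    [CompleteSpace 𝓗] (Q : 𝓗 →L[ℂ] 𝓗) : 𝓗 →L[ℂ] 𝓗 :=
  ((2 * Real.sqrt 3 : ℝ) : ℂ)⁻¹ • (adjoint Q + Q)

/-- The hermitian parasupercharge `Q₂ = (Q† − Q)/(2√3·i)`. -/
noncomputable def hermQ2 {𝓗 : Type*} [NormedAddCommGroup 𝓗] [InnerProductSpace ℂ 𝓗]
    [CompleteSpace 𝓗] (Q : 𝓗 →L[ℂ] 𝓗) : 𝓗 →L[ℂ] 𝓗 :=
  (((2 * Real.sqrt 3 : ℝ) : ℂ) * Complex.I)⁻¹ • (adjoint Q - Q)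

theorem commute_star_mul_self_of_mul_add_mul_eq_mul {R : Type*} [Ring R] [StarRing R]
    {P K B : R} (hP : IsSelfAdjoint P) (hK : IsSelfAdjoint K) (hBK : Commute B K)
    (hBP : B * P + P * B = B * K) : Commute P (star B * B) := by
  have hBK' : Commute (star B) K := by simpa [hK.star_eq] using hBK.star_star
  have hBP' : star B * P + P * star B = K * star B := by
    simpa [hP.star_eq, hK.star_eq, add_comm] using congrArg star hBP
  calc P * (star B * B) = (K * star B - star B * P) * B := by
        rw [← hBP', add_sub_cancel_left, mul_assoc]
    _ = K * (star B * B) - star B * (P * B) := by noncomm_ring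
    _ = star B * B * K - star B * (B * K - B * P) := by
        rw [(hBK'.symm.mul_right hBK.symm).eq, eq_sub_of_add_eq' hBP]
    _ = star B * B * P := by noncomm_ring

theorem sq_mul_anticomm_add_anticomm_mul_sq {R : Type*} [Ring R] (a b : R) :
    a ^ 2 * (b * a + a * b) + (b * a + a * b) * a ^ 2
      = a ^ 3 * b + a ^ 2 * b * a + a * b * a ^ 2 + b * a ^ 3 := by
  noncomm_ring

section

variable {𝓗 : Type*} [NormedAddCommGroup 𝓗] [InnerProductSpace ℂ 𝓗] [CompleteSpace 𝓗]

theorem apply_eq_zero_of_mul_add_mul_eq_mul {P K B : 𝓗 →L[ℂ] 𝓗} (hP : 0 ≤ P)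
    (hK : IsSelfAdjoint K) (hBK : Commute B K) (hBP : B * P + P * B = B * K)
    {x : 𝓗} {μ : ℝ} (hx : K x = (μ : ℂ) • x) (hμ : μ < 0) : B x = 0 := by
  have hC : Commute P (star B * B) :=
    commute_star_mul_self_of_mul_add_mul_eq_mul hP.isSelfAdjoint hK hBK hBP
  have hPC : (P * (star B * B)).IsPositive :=
    (nonneg_iff_isPositive _).1 (hC.mul_nonneg hP (star_mul_self_nonneg B))
  have hform : (P * (star B * B)) x = adjoint B ((μ : ℂ) • B x - P (B x)) := by
    rw [hC.eq, mul_assoc, eq_sub_of_add_eq hBP, star_eq_adjoint]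
    simp [hx]
  have hPCx := hPC.re_inner_nonneg_left x
  rw [hform, adjoint_inner_left, inner_sub_left, inner_smul_left, map_sub] at hPCx
  have hPBx := ((nonneg_iff_isPositive P).1 hP).re_inner_nonneg_left (B x)
  have hnorm : ‖B x‖ ^ 2 ≤ 0 := by
    rw [Complex.conj_ofReal, RCLike.re_to_complex, Complex.re_ofReal_mul,
      ← RCLike.re_to_complex, inner_self_eq_norm_sq] at hPCx
    nlinarith
  simpa using hnorm

theorem adjoint_mul_self_add_mul_adjoint_nonneg (Q : 𝓗 →L[ℂ] 𝓗) :
    0 ≤ adjoint Q * Q + Q * adjoint Q := by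
  rw [← star_eq_adjoint]
  exact add_nonneg (star_mul_self_nonneg Q) (mul_star_self_nonneg Q)

theorem adjoint_add_self_eq_smul_hermQ1 (Q : 𝓗 →L[ℂ] 𝓗) :
    adjoint Q + Q = ((2 * Real.sqrt 3 : ℝ) : ℂ) • hermQ1 Q := by
  rw [hermQ1, smul_smul, mul_inv_cancel₀ (Complex.ofReal_ne_zero.2 (by positivity)), one_smul]

end

theorem stmt13_general {𝓗 : Type*} [NormedAddCommGroup 𝓗] [InnerProductSpace ℂ 𝓗] [CompleteSpace 𝓗]
    (Q H : 𝓗 →L[ℂ] 𝓗) (hH : IsSelfAdjoint H)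
    (hQH : Q * H = H * Q) (hQdH : adjoint Q * H = H * adjoint Q)
    (hii : Q ^ 3 * adjoint Q + Q ^ 2 * adjoint Q * Q + Q * adjoint Q * Q ^ 2
      + adjoint Q * Q ^ 3 = 6 * (Q ^ 2 * H))
    (hiv : (adjoint Q) ^ 3 * Q + (adjoint Q) ^ 2 * Q * adjoint Q
      + adjoint Q * Q * (adjoint Q) ^ 2 + Q * (adjoint Q) ^ 3 = 6 * ((adjoint Q) ^ 2 * H))
    (Ψ : 𝓗) (q₁ E : ℝ)
    (hq₁ : hermQ1 Q Ψ = (q₁ : ℂ) • Ψ)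
    (hE : H Ψ = (E : ℂ) • Ψ)
    (hneg : E < 0) :
    (Q ^ 2) Ψ = 0 ∧ ((adjoint Q) ^ 2) Ψ = 0 ∧
      (Q + adjoint Q) Ψ = ((2 * Real.sqrt 3 * q₁ : ℝ) : ℂ) • Ψ := by
  have hP := adjoint_mul_self_add_mul_adjoint_nonneg Q
  have hK : IsSelfAdjoint (6 * H) := ((IsSelfAdjoint.ofNat 6).commute_iff hH).1 (.ofNat_left 6 H)
  have hKΨ : (6 * H) Ψ = ((6 * E : ℝ) : ℂ) • Ψ := by
    simp [hE, mul_smul, ofNat_smul_eq_nsmul]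
  have h6E : 6 * E < 0 := by linarith
  refine ⟨?_, ?_, ?_⟩
  · refine apply_eq_zero_of_mul_add_mul_eq_mul hP hK
      ((Commute.ofNat_right _ 6).mul_right (Commute.pow_left hQH 2)) ?_ hKΨ h6E
    rw [sq_mul_anticomm_add_anticomm_mul_sq, hii]
    exact (Commute.ofNat_left 6 _).left_comm H
  · refine apply_eq_zero_of_mul_add_mul_eq_mul hP hK
      ((Commute.ofNat_right _ 6).mul_right (Commute.pow_left hQdH 2)) ?_ hKΨ h6E
    rw [add_comm (adjoint Q * Q), sq_mul_anticomm_add_anticomm_mul_sq, hiv]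
    exact (Commute.ofNat_left 6 _).left_comm H
  · rw [add_comm, adjoint_add_self_eq_smul_hermQ1, smul_apply, hq₁, smul_smul]
    push_cast
    ring_nf

/-- Assuming the p=3 parasupersymmetry algebra, if `Ψ ≠ 0` satisfies
`Q₁Ψ = q₁Ψ` and `HΨ = EΨ` with `E < 0`, then `Q²Ψ = 0`, `(Q†)²Ψ = 0` and
`(Q + Q†)Ψ = 2√3·q₁·Ψ`. -/
theorem stmt13 {𝓗 : Type*} [NormedAddCommGroup 𝓗] [InnerProductSpace ℂ 𝓗] [CompleteSpace 𝓗]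
    (Q H : 𝓗 →L[ℂ] 𝓗) (hH : IsSelfAdjoint H)
    (hQH : Q * H = H * Q) (hQdH : adjoint Q * H = H * adjoint Q)
    (hii : Q ^ 3 * adjoint Q + Q ^ 2 * adjoint Q * Q + Q * adjoint Q * Q ^ 2
      + adjoint Q * Q ^ 3 = 6 * (Q ^ 2 * H))
    (hiii : Q * (adjoint Q) ^ 2 * Q = adjoint Q * Q ^ 2 * adjoint Q)
    (hiv : (adjoint Q) ^ 3 * Q + (adjoint Q) ^ 2 * Q * adjoint Q
      + adjoint Q * Q * (adjoint Q) ^ 2 + Q * (adjoint Q) ^ 3 = 6 * ((adjoint Q) ^ 2 * H))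
    (hQ4 : Q ^ 4 = 0) (hQd4 : (adjoint Q) ^ 4 = 0)
    (Ψ : 𝓗) (hΨ : Ψ ≠ 0) (q₁ E : ℝ)
    (hq₁ : hermQ1 Q Ψ = (q₁ : ℂ) • Ψ)
    (hE : H Ψ = (E : ℂ) • Ψ)
    (hneg : E < 0) :
    (Q ^ 2) Ψ = 0 ∧ ((adjoint Q) ^ 2) Ψ = 0 ∧
      (Q + adjoint Q) Ψ = ((2 * Real.sqrt 3 * q₁ : ℝ) : ℂ) • Ψ :=
  stmt13_general Q H hH hQH hQdH hii hiv Ψ q₁ E hq₁ hE hneg
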